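/- arXiv:1104.0359 — 2 statements merged into one kernel-verified Lean document; each statement's English description precedes it below -/
import Mathlib

section
/- Let X \in RV_{-\beta} and Y \in RV_{-\gamma} be random variables with \beta, \gamma > 0, and suppose \bar{F}_X(x) \sim \lambda \bar{F}_Y(x^{\beta/\gamma}) as x \to \infty for some \lambda > 0. Then VaR_\alpha(X) \sim VaR_{1 - (1-\alpha)/\lambda}(Y)^{\gamma/\beta} as \alpha \to 1. -/
open MeasureTheory ProbabilityTheory Filter Topology

/-- Tail probability function of a random variable. -/
noncomputable def tail {Ω : Type*} [MeasurableSpace Ω] (P : Measure Ω) (X : Ω → ℝ) (x : ℝ) : ℝ :=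
  (P {ω | x < X ω}).toReal

/-- Distribution function of a random variable. -/
noncomputable def cdf' {Ω : Type*} [MeasurableSpace Ω] (P : Measure Ω) (X : Ω → ℝ) (x : ℝ) : ℝ :=
  (P {ω | X ω ≤ x}).toReal

/-- Value at Risk: the α-quantile. -/
noncomputable def VaR {Ω : Type*} [MeasurableSpace Ω] (P : Measure Ω) (X : Ω → ℝ) (α : ℝ) : ℝ :=
  sInf {x : ℝ | α ≤ cdf' P X x}

/-- f is regularly varying (at infinity) with index k. -/
def RegVary (f : ℝ → ℝ) (k : ℝ) : Prop :=
  ∀ t : ℝ, 0 < t → Tendsto (fun x => f (t * x) / f x) atTop (𝓝 (t ^ k))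

lemma tail_anti {Ω : Type*} [MeasurableSpace Ω] (P : Measure Ω) [IsFiniteMeasure P] (X : Ω → ℝ) :
    Antitone (tail P X) := by
  intro a b hab
  exact ENNReal.toReal_mono (measure_ne_top P _)
    (measure_mono (fun ω hω => lt_of_le_of_lt hab hω))

lemma tail_nonneg {Ω : Type*} [MeasurableSpace Ω] (P : Measure Ω) (X : Ω → ℝ) (x : ℝ) :
    0 ≤ tail P X x := ENNReal.toReal_nonneg

lemma cdf'_eq {Ω : Type*} [MeasurableSpace Ω] (P : Measure Ω) [IsProbabilityMeasure P]
    (X : Ω → ℝ) (hX : Measurable X) (x : ℝ) :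
    cdf' P X x = 1 - tail P X x := by
  have hs : MeasurableSet {ω | X ω ≤ x} := hX measurableSet_Iic
  have hc : {ω | x < X ω} = {ω | X ω ≤ x}ᶜ := by ext ω; simp [not_le]
  have hadd : P {ω | X ω ≤ x} + P {ω | x < X ω} = 1 := by
    rw [hc, measure_add_measure_compl hs, measure_univ]
  have h1 : (P {ω | X ω ≤ x}).toReal + (P {ω | x < X ω}).toReal = 1 := by
    rw [← ENNReal.toReal_add (measure_ne_top P _) (measure_ne_top P _), hadd]; simp
  unfold cdf' tail; linarith

lemma regvary_pos {f : ℝ → ℝ} (hnn : ∀ x, 0 ≤ f x) {k : ℝ} (h : RegVary f k) :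
    ∃ x0 : ℝ, ∀ x, x0 ≤ x → 0 < f x := by
  have h1 := h 1 one_pos
  simp only [one_mul, Real.one_rpow] at h1
  have h2 : ∀ᶠ x in atTop, (0:ℝ) < f x / f x := h1.eventually (eventually_gt_nhds one_pos)
  rw [eventually_atTop] at h2
  obtain ⟨x0, hx0⟩ := h2
  refine ⟨x0, fun x hx => ?_⟩
  have hth := hx0 x hx
  rcases (hnn x).eq_or_lt with h'|h'
  · rw [← h'] at hth; norm_num at hth
  · exact h'

lemma regvary_tendsto_zero {f : ℝ → ℝ} (hanti : Antitone f) (hnn : ∀ x, 0 ≤ f x)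
    {β : ℝ} (hβ : 0 < β) (h : RegVary f (-β)) : Tendsto f atTop (𝓝 0) := by
  have hbdd : BddBelow (Set.range f) := ⟨0, fun y ⟨x, hx⟩ => hx ▸ hnn x⟩
  have hL := tendsto_atTop_ciInf hanti hbdd
  set L := ⨅ x, f x with hLdef
  have hL0 : 0 ≤ L := le_ciInf hnn
  rcases hL0.eq_or_lt with hL' | hL'
  · rwa [← hL'] at hL
  · exfalso
    have hmul : Tendsto (fun x : ℝ => 2 * x) atTop atTop := tendsto_id.const_mul_atTop two_pos
    have h2 : Tendsto (fun x => f (2*x)) atTop (𝓝 L) := hL.comp hmul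
    have h3 : Tendsto (fun x => f (2*x) / f x) atTop (𝓝 (L / L)) := h2.div hL (ne_of_gt hL')
    have h4 := h 2 two_pos
    have h5 : L / L = (2:ℝ) ^ (-β) := tendsto_nhds_unique h3 h4
    rw [div_self (ne_of_gt hL')] at h5
    have hlt : (2:ℝ) ^ (-β) < 1 :=
      Real.rpow_lt_one_of_one_lt_of_neg one_lt_two (by linarith)
    rw [← h5] at hlt
    exact lt_irrefl _ hlt

set_option maxHeartbeats 2000000 in
theorem stmt4 {Ω : Type*} [MeasurableSpace Ω] (P : Measure Ω) [IsProbabilityMeasure P]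
    (X Y : Ω → ℝ) (hX : Measurable X) (hY : Measurable Y)
    (β γ lam : ℝ) (hβ : 0 < β) (hγ : 0 < γ) (hlam : 0 < lam)
    (hRVX : RegVary (tail P X) (-β)) (hRVY : RegVary (tail P Y) (-γ))
    (hsim : Tendsto (fun x => tail P X x / (lam * tail P Y (x ^ (β / γ)))) atTop (𝓝 1)) :
    Tendsto (fun α => VaR P X α / (VaR P Y (1 - (1 - α) / lam)) ^ (γ / β))
      (𝓝[<] (1 : ℝ)) (𝓝 1) := by
  set l := 𝓝[<] (1:ℝ) with hldef
  set F := tail P X with hFdef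
  set G := tail P Y with hGdef
  have hFanti : Antitone F := tail_anti P X
  have hGanti : Antitone G := tail_anti P Y
  have hFnn : ∀ x, 0 ≤ F x := tail_nonneg P X
  have hGnn : ∀ x, 0 ≤ G x := tail_nonneg P Y
  obtain ⟨x0, hx0⟩ := regvary_pos hFnn hRVX
  obtain ⟨y0, hy0⟩ := regvary_pos hGnn hRVY
  have hF0 : Tendsto F atTop (𝓝 0) := regvary_tendsto_zero hFanti hFnn hβ hRVX
  have hG0 : Tendsto G atTop (𝓝 0) := regvary_tendsto_zero hGanti hGnn hγ hRVY
  have hβγ : (0:ℝ) < β/γ := div_pos hβ hγ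
  have hγβ : (0:ℝ) < γ/β := div_pos hγ hβ
  set u : ℝ → ℝ := fun α => 1 - α with hudef
  set v : ℝ → ℝ := fun α => (1-α)/lam with hvdef
  set qX : ℝ → ℝ := fun α => sInf {x | F x ≤ u α} with hqXdef
  set qY : ℝ → ℝ := fun α => sInf {x | G x ≤ v α} with hqYdef
  -- rewrite the goal in terms of qX, qY
  have hVaRX : ∀ α : ℝ, VaR P X α = qX α := by
    intro α
    unfold VaR
    show sInf {x : ℝ | α ≤ cdf' P X x} = sInf {x | F x ≤ u α}
    congr 1
    ext x
    rw [Set.mem_setOf_eq, Set.mem_setOf_eq, cdf'_eq P X hX x, ← hFdef]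
    constructor
    · intro h
      show F x ≤ 1 - α
      linarith
    · intro h
      have h' : F x ≤ 1 - α := h
      linarith
  have hVaRY : ∀ α : ℝ, VaR P Y (1 - (1-α)/lam) = qY α := by
    intro α
    unfold VaR
    show sInf {x : ℝ | 1 - (1-α)/lam ≤ cdf' P Y x} = sInf {x | G x ≤ v α}
    congr 1
    ext x
    rw [Set.mem_setOf_eq, Set.mem_setOf_eq, cdf'_eq P Y hY x, ← hGdef]
    constructor
    · intro h
      show G x ≤ (1 - α) / lam
      linarith
    · intro h
      have h' : G x ≤ (1 - α) / lam := h
      linarith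
  simp only [hVaRX, hVaRY]
  -- basic eventual facts
  have hαlt : ∀ᶠ α in l, α < 1 := eventually_mem_nhdsWithin
  have hupos : ∀ᶠ α in l, 0 < u α := hαlt.mono fun α h => by
    show (0:ℝ) < 1 - α; linarith
  have hvpos : ∀ᶠ α in l, 0 < v α := hαlt.mono fun α h => by
    show (0:ℝ) < (1 - α) / lam; exact div_pos (by linarith) hlam
  have hu0 : Tendsto u l (𝓝 0) := by
    have h1 : Tendsto u (𝓝 1) (𝓝 0) := by
      have h2 : Tendsto (fun α : ℝ => 1 - α) (𝓝 (1:ℝ)) (𝓝 (1 - 1)) :=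
        tendsto_const_nhds.sub tendsto_id
      norm_num at h2
      exact h2
    exact h1.mono_left nhdsWithin_le_nhds
  have hv0 : Tendsto v l (𝓝 0) := by
    have h2 := hu0.div_const lam
    norm_num at h2
    exact h2
  have hluv : ∀ α : ℝ, lam * v α = u α := fun α => by
    show lam * ((1 - α) / lam) = 1 - α
    field_simp
  -- qY tends to infinity
  have hqYtop : Tendsto qY l atTop := by
    rw [tendsto_atTop]
    intro M
    have hGM : 0 < G (max M y0) := hy0 _ (le_max_right _ _)
    filter_upwards [hv0.eventually_lt_const hGM, hvpos] with α h2 h3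
    have hne : {x | G x ≤ v α}.Nonempty := by
      obtain ⟨x, hx⟩ := (hG0.eventually_lt_const h3).exists
      exact ⟨x, hx.le⟩
    have hstep : max M y0 ≤ sInf {x | G x ≤ v α} := le_csInf hne fun x hx => by
      by_contra hlt
      push_neg at hlt
      exact absurd hx (not_le.2 (lt_of_lt_of_le h2 (hGanti hlt.le)))
    exact le_trans (le_max_left M y0) hstep
  have hQtop : Tendsto (fun α => qY α ^ (γ/β)) l atTop :=
    (tendsto_rpow_atTop hγβ).comp hqYtop
  -- bddBelow / nonempty facts
  have hbddY : ∀ᶠ α in l, ∀ x ∈ {x | G x ≤ v α}, y0 ≤ x := by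
    filter_upwards [hv0.eventually_lt_const (hy0 y0 le_rfl)] with α h2 x hx
    by_contra hlt
    push_neg at hlt
    exact absurd hx (not_le.2 (lt_of_lt_of_le h2 (hGanti hlt.le)))
  have hbddX : ∀ᶠ α in l, ∀ x ∈ {x | F x ≤ u α}, x0 ≤ x := by
    filter_upwards [hu0.eventually_lt_const (hx0 x0 le_rfl)] with α h2 x hx
    by_contra hlt
    push_neg at hlt
    exact absurd hx (not_le.2 (lt_of_lt_of_le h2 (hFanti hlt.le)))
  have hneY : ∀ᶠ α in l, {x | G x ≤ v α}.Nonempty := by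
    filter_upwards [hvpos] with α h3
    obtain ⟨x, hx⟩ := (hG0.eventually_lt_const h3).exists
    exact ⟨x, hx.le⟩
  have hneX : ∀ᶠ α in l, {x | F x ≤ u α}.Nonempty := by
    filter_upwards [hupos] with α h3
    obtain ⟨x, hx⟩ := (hF0.eventually_lt_const h3).exists
    exact ⟨x, hx.le⟩
  -- the key two-sided bound
  have key : ∀ ε : ℝ, 0 < ε → ε < 1 →
      (∀ᶠ α in l, qX α ≤ (1+ε) * (qY α ^ (γ/β)))
        ∧ (∀ᶠ α in l, (1-ε) * (qY α ^ (γ/β)) ≤ qX α) := by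
    intro ε hε hε1
    have h1ε : (0:ℝ) < 1 + ε := by linarith
    have h1me : (0:ℝ) < 1 - ε := by linarith
    constructor
    · -- upper bound
      obtain ⟨c, hcdef⟩ : ∃ t : ℝ, t = ((1+ε) ^ (β/γ)) ^ ((1:ℝ)/2) := ⟨_, rfl⟩
      have hXgt1 : 1 < (1+ε) ^ (β/γ) :=
        (Real.one_lt_rpow_iff_of_pos h1ε).2 (Or.inl ⟨by linarith, hβγ⟩)
      have hc1 : 1 < c := by
        rw [hcdef]
        exact (Real.one_lt_rpow_iff_of_pos (by positivity)).2 (Or.inl ⟨hXgt1, by norm_num⟩)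
      have hcpos : (0:ℝ) < c := by linarith
      have hcc : c * c = (1+ε) ^ (β/γ) := by
        rw [hcdef, ← Real.rpow_add (by positivity)]
        norm_num
      obtain ⟨ρ, hρdef⟩ : ∃ t : ℝ, t = c ^ (-γ) := ⟨_, rfl⟩
      have hρpos : 0 < ρ := by rw [hρdef]; exact Real.rpow_pos_of_pos hcpos _
      have hρlt1 : ρ < 1 := by
        rw [hρdef]; exact Real.rpow_lt_one_of_one_lt_of_neg hc1 (by linarith)
      obtain ⟨δ, hδdef⟩ : ∃ t : ℝ, t = (1 - ρ)/3 := ⟨_, rfl⟩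
      have hδpos : 0 < δ := by rw [hδdef]; linarith
      have hδlt1 : δ < 1 := by rw [hδdef]; linarith
      have hδ3 : 3 * δ = 1 - ρ := by rw [hδdef]; ring
      have halg : (1+δ) * (ρ+δ) ≤ 1 := by
        have hkey : 0 < δ * (2 - ρ - δ) :=
          mul_pos hδpos (by linarith)
        nlinarith [hkey, hδ3]
      have hcq : Tendsto (fun α => c * qY α) l atTop := hqYtop.const_mul_atTop hcpos
      have h1εQ : Tendsto (fun α => (1+ε) * (qY α ^ (γ/β))) l atTop :=
        hQtop.const_mul_atTop h1ε
      have hratio1 : Tendsto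
          (fun α => F ((1+ε) * (qY α ^ (γ/β))) / (lam * G (((1+ε) * (qY α ^ (γ/β))) ^ (β/γ))))
          l (𝓝 1) := hsim.comp h1εQ
      have hratio2 : Tendsto (fun α => G (c * (c * qY α)) / G (c * qY α)) l (𝓝 ρ) := by
        rw [hρdef]; exact (hRVY c hcpos).comp hcq
      have e1 : ∀ᶠ α in l,
          |F ((1+ε) * (qY α ^ (γ/β))) / (lam * G (((1+ε) * (qY α ^ (γ/β))) ^ (β/γ))) - 1| < δ := by
        have := Metric.tendsto_nhds.1 hratio1 δ hδpos
        simpa [Real.dist_eq] using this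
      have e2 : ∀ᶠ α in l, |G (c * (c * qY α)) / G (c * qY α) - ρ| < δ := by
        have := Metric.tendsto_nhds.1 hratio2 δ hδpos
        simpa [Real.dist_eq] using this
      have e3 : ∀ᶠ α in l, y0 ≤ c * qY α := hcq.eventually_ge_atTop y0
      have e4 : ∀ᶠ α in l, y0 ≤ c * (c * qY α) :=
        (hcq.const_mul_atTop hcpos).eventually_ge_atTop y0
      have e5 : ∀ᶠ α in l, 0 < qY α := hqYtop.eventually_gt_atTop 0
      filter_upwards [e1, e2, e3, e4, e5, hbddY, hneY, hbddX, hupos, hvpos] with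
        α r1 r2 hy1 hy2 hqpos hbY hnY hbX hup hvp
      have hexp : ((1+ε) * (qY α ^ (γ/β))) ^ (β/γ) = c * (c * qY α) := by
        rw [Real.mul_rpow h1ε.le (Real.rpow_nonneg hqpos.le _), ← Real.rpow_mul hqpos.le]
        have h1 : (γ/β) * (β/γ) = 1 := by field_simp
        rw [h1, Real.rpow_one, ← hcc, mul_assoc]
      rw [hexp] at r1
      have hg1 : 0 < G (c * qY α) := hy0 _ hy1
      have hg2 : 0 < G (c * (c * qY α)) := hy0 _ hy2
      have hGcq : G (c * qY α) ≤ v α := by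
        have hins : sInf {x | G x ≤ v α} < c * qY α := by
          have h' : qY α < c * qY α := by nlinarith [hqpos, hc1]
          exact h'
        obtain ⟨x, hxmem, hxlt⟩ := (csInf_lt_iff ⟨y0, fun x hx => hbY x hx⟩ hnY).1 hins
        exact le_trans (hGanti hxlt.le) hxmem
      have hDpos : 0 < lam * G (c * (c * qY α)) := mul_pos hlam hg2
      have hF1 : F ((1+ε) * (qY α ^ (γ/β))) ≤ (1+δ) * (lam * G (c * (c * qY α))) := by
        have h := (abs_lt.1 r1).2
        have : F ((1+ε) * (qY α ^ (γ/β))) / (lam * G (c * (c * qY α))) < 1 + δ := by linarith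
        exact ((div_lt_iff₀ hDpos).1 this).le
      have hG2 : G (c * (c * qY α)) ≤ (ρ+δ) * G (c * qY α) := by
        have h := (abs_lt.1 r2).2
        have : G (c * (c * qY α)) / G (c * qY α) < ρ + δ := by linarith
        exact ((div_lt_iff₀ hg1).1 this).le
      have hfinal : F ((1+ε) * (qY α ^ (γ/β))) ≤ u α := by
        have s1 : G (c * (c * qY α)) ≤ (ρ+δ) * v α := by
          calc G (c * (c * qY α)) ≤ (ρ+δ) * G (c * qY α) := hG2
          _ ≤ (ρ+δ) * v α := mul_le_mul_of_nonneg_left hGcq (by linarith)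
        have s2 : lam * G (c * (c * qY α)) ≤ lam * ((ρ+δ) * v α) :=
          mul_le_mul_of_nonneg_left s1 hlam.le
        have s3 : F ((1+ε) * (qY α ^ (γ/β))) ≤ (1+δ) * (lam * ((ρ+δ) * v α)) :=
          le_trans hF1 (mul_le_mul_of_nonneg_left s2 (by linarith))
        have s4 : (1+δ) * (lam * ((ρ+δ) * v α)) = ((1+δ) * (ρ+δ)) * (lam * v α) := by ring
        rw [s4, hluv α] at s3
        have s5 : ((1+δ) * (ρ+δ)) * u α ≤ 1 * u α :=
          mul_le_mul_of_nonneg_right halg hup.le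
        rw [one_mul] at s5
        exact s3.trans s5
      show sInf {x | F x ≤ u α} ≤ (1+ε) * (qY α ^ (γ/β))
      exact csInf_le ⟨x0, fun x hx => hbX x hx⟩ hfinal
    · -- lower bound
      obtain ⟨d, hddef⟩ : ∃ t : ℝ, t = ((1-ε) ^ (β/γ)) ^ ((1:ℝ)/2) := ⟨_, rfl⟩
      have hdpos : (0:ℝ) < d := by rw [hddef]; positivity
      have hYlt1 : (1-ε) ^ (β/γ) < 1 := Real.rpow_lt_one h1me.le (by linarith) hβγ
      have hd1 : d < 1 := by
        rw [hddef]
        exact Real.rpow_lt_one (by positivity) hYlt1 (by norm_num)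
      have hdd : d * d = (1-ε) ^ (β/γ) := by
        rw [hddef, ← Real.rpow_add (by positivity)]
        norm_num
      obtain ⟨σ, hσdef⟩ : ∃ t : ℝ, t = d ^ (-γ) := ⟨_, rfl⟩
      have hσ1 : 1 < σ := by
        rw [hσdef]
        exact (Real.one_lt_rpow_iff_of_pos hdpos).2 (Or.inr ⟨hd1, by linarith⟩)
      obtain ⟨δ', hδ'def⟩ : ∃ t : ℝ, t = (σ-1)/(σ+1) := ⟨_, rfl⟩
      have hδ'pos : 0 < δ' := by rw [hδ'def]; exact div_pos (by linarith) (by linarith)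
      have hδ'lt1 : δ' < 1 := by
        rw [hδ'def, div_lt_one (by linarith)]; linarith
      have hδ'eq : δ' * (σ+1) = σ - 1 := by
        rw [hδ'def]; field_simp
      have halg' : 1 ≤ (1-δ') * (σ-δ') := by nlinarith [hδ'eq, sq_nonneg δ']
      have hdq : Tendsto (fun α => d * qY α) l atTop := hqYtop.const_mul_atTop hdpos
      have h1mQ : Tendsto (fun α => (1-ε) * (qY α ^ (γ/β))) l atTop :=
        hQtop.const_mul_atTop h1me
      have hratio1 : Tendsto
          (fun α => F ((1-ε) * (qY α ^ (γ/β))) / (lam * G (((1-ε) * (qY α ^ (γ/β))) ^ (β/γ))))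
          l (𝓝 1) := hsim.comp h1mQ
      have hratio2 : Tendsto (fun α => G (d * (d * qY α)) / G (d * qY α)) l (𝓝 σ) := by
        rw [hσdef]; exact (hRVY d hdpos).comp hdq
      have e1 : ∀ᶠ α in l,
          |F ((1-ε) * (qY α ^ (γ/β))) / (lam * G (((1-ε) * (qY α ^ (γ/β))) ^ (β/γ))) - 1| < δ' := by
        have := Metric.tendsto_nhds.1 hratio1 δ' hδ'pos
        simpa [Real.dist_eq] using this
      have e2 : ∀ᶠ α in l, |G (d * (d * qY α)) / G (d * qY α) - σ| < δ' := by
        have := Metric.tendsto_nhds.1 hratio2 δ' hδ'pos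
        simpa [Real.dist_eq] using this
      have e3 : ∀ᶠ α in l, y0 ≤ d * qY α := hdq.eventually_ge_atTop y0
      have e4 : ∀ᶠ α in l, y0 ≤ d * (d * qY α) :=
        (hdq.const_mul_atTop hdpos).eventually_ge_atTop y0
      have e5 : ∀ᶠ α in l, 0 < qY α := hqYtop.eventually_gt_atTop 0
      filter_upwards [e1, e2, e3, e4, e5, hbddY, hneY, hneX, hupos, hvpos] with
        α r1 r2 hy1 hy2 hqpos hbY hnY hnX hup hvp
      have hexp : ((1-ε) * (qY α ^ (γ/β))) ^ (β/γ) = d * (d * qY α) := by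
        rw [Real.mul_rpow h1me.le (Real.rpow_nonneg hqpos.le _), ← Real.rpow_mul hqpos.le]
        have h1 : (γ/β) * (β/γ) = 1 := by field_simp
        rw [h1, Real.rpow_one, ← hdd, mul_assoc]
      rw [hexp] at r1
      have hg1 : 0 < G (d * qY α) := hy0 _ hy1
      have hg2 : 0 < G (d * (d * qY α)) := hy0 _ hy2
      have hGdq : v α < G (d * qY α) := by
        by_contra hle
        push_neg at hle
        have hmem : d * qY α ∈ {x | G x ≤ v α} := hle
        have hle2 : qY α ≤ d * qY α := csInf_le ⟨y0, fun x hx => hbY x hx⟩ hmem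
        nlinarith [hqpos, hd1]
      have hDpos : 0 < lam * G (d * (d * qY α)) := mul_pos hlam hg2
      have hF1 : (1-δ') * (lam * G (d * (d * qY α))) < F ((1-ε) * (qY α ^ (γ/β))) := by
        have h := (abs_lt.1 r1).1
        have : 1 - δ' < F ((1-ε) * (qY α ^ (γ/β))) / (lam * G (d * (d * qY α))) := by linarith
        exact (lt_div_iff₀ hDpos).1 this
      have hG2 : (σ-δ') * G (d * qY α) < G (d * (d * qY α)) := by
        have h := (abs_lt.1 r2).1
        have : σ - δ' < G (d * (d * qY α)) / G (d * qY α) := by linarith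
        exact (lt_div_iff₀ hg1).1 this
      have hσδ : 0 < σ - δ' := by linarith
      have hfinal : u α < F ((1-ε) * (qY α ^ (γ/β))) := by
        have s1 : (σ-δ') * v α < (σ-δ') * G (d * qY α) :=
          mul_lt_mul_of_pos_left hGdq hσδ
        have s2 : lam * ((σ-δ') * v α) < lam * G (d * (d * qY α)) :=
          mul_lt_mul_of_pos_left (s1.trans hG2) hlam
        have s3 : (1-δ') * (lam * ((σ-δ') * v α)) < F ((1-ε) * (qY α ^ (γ/β))) := by
          have h1d : (0:ℝ) < 1 - δ' := by linarith
          calc (1-δ') * (lam * ((σ-δ') * v α)) < (1-δ') * (lam * G (d * (d * qY α))) :=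
                mul_lt_mul_of_pos_left s2 h1d
          _ < F ((1-ε) * (qY α ^ (γ/β))) := hF1
        have s4 : (1-δ') * (lam * ((σ-δ') * v α)) = ((1-δ') * (σ-δ')) * (lam * v α) := by ring
        rw [s4, hluv α] at s3
        have s5 : 1 * u α ≤ ((1-δ') * (σ-δ')) * u α :=
          mul_le_mul_of_nonneg_right halg' hup.le
        rw [one_mul] at s5
        exact lt_of_le_of_lt s5 s3
      show (1-ε) * (qY α ^ (γ/β)) ≤ sInf {x | F x ≤ u α}
      refine le_csInf hnX fun x hx => ?_
      by_contra hlt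
      push_neg at hlt
      have : u α < F x := lt_of_lt_of_le hfinal (hFanti hlt.le)
      exact absurd hx (not_le.2 this)
  -- conclude
  rw [Metric.tendsto_nhds]
  intro ε hε
  have hmpos : 0 < min (ε/2) (1/2) := lt_min (by linarith) (by norm_num)
  have hmlt1 : min (ε/2) (1/2) < 1 := lt_of_le_of_lt (min_le_right _ _) (by norm_num)
  obtain ⟨k1, k2⟩ := key (min (ε/2) (1/2)) hmpos hmlt1
  have hQpos : ∀ᶠ α in l, 0 < qY α ^ (γ/β) :=
    (hqYtop.eventually_gt_atTop 0).mono fun α h => Real.rpow_pos_of_pos h _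
  filter_upwards [k1, k2, hQpos] with α h1 h2 h3
  rw [Real.dist_eq]
  have hm2 : min (ε/2) (1/2) ≤ ε/2 := min_le_left _ _
  have hub : qX α / (qY α ^ (γ/β)) ≤ 1 + min (ε/2) (1/2) := (div_le_iff₀ h3).2 (by linarith)
  have hlb : 1 - min (ε/2) (1/2) ≤ qX α / (qY α ^ (γ/β)) := (le_div_iff₀ h3).2 (by linarith)
  have habs : |qX α / qY α ^ (γ/β) - 1| ≤ min (ε/2) (1/2) :=
    abs_le.2 ⟨by linarith, by linarith⟩
  linarith
end

section
/- Let X \in RV_{-\beta} and Y \in RV_{-\gamma} be random variables with \beta, \gamma > 0, and suppose \bar{F}_X(x) \sim \lambda \bar{F}_Y(x^{\beta/\gamma}) as x \to \infty for some \lambda > 0. Then VaR_\alpha(X) \sim \lambda^{1/\beta} VaR_\alpha(Y)^{\gamma/\beta} as \alpha \to 1. -/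
open MeasureTheory ProbabilityTheory Filter Topology

/-!
For `0 < α < 1`, `VaR` is the generalized inverse of the distribution function:
`VaR_X(α) ≤ y ↔ F̄_X(y) ≤ 1 - α`. Put `h(v) = λ^{1/β} v^{γ/β}`. Since `h(v)^{β/γ} = λ^{1/γ} v`,
the tail equivalence and regular variation of `F̄_Y` and `F̄_X` give
`F̄_X(t h(v)) / F̄_Y(v) → t^{-β}` for every `t > 0`. For `t > 1` this makes
`F̄_X(t h(v)) < F̄_Y(v)` eventually, and at `v = VaR_Y(α) → ∞` the Galois connection yields
`VaR_X(α) ≤ t h(VaR_Y(α))`. For `t < 1` the reverse inequality `F̄_X(t h(w)) > F̄_Y(w) > 1 - α`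
holds for all large `w < VaR_Y(α)`, so `t h(w) < VaR_X(α)`, and continuity of `h` gives
`t h(VaR_Y(α)) ≤ VaR_X(α)`.
-/

namespace ProbabilityTheory

variable {μ : Measure ℝ} {α : ℝ}

lemma bddBelow_setOf_le_cdf (hα : 0 < α) : BddBelow {x | α ≤ cdf μ x} := by
  obtain ⟨b, hb⟩ := ((tendsto_cdf_atBot (μ := μ)).eventually_lt_const hα).exists_forall_of_atBot
  exact ⟨b, fun x hx => not_lt.mp fun hxb => (hb x hxb.le).not_ge hx⟩

lemma nonempty_setOf_le_cdf (hα : α < 1) : {x | α ≤ cdf μ x}.Nonempty :=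
  ((tendsto_cdf_atTop (μ := μ)).eventually_const_lt hα).exists.imp fun _ => le_of_lt

lemma sInf_setOf_le_cdf_le_iff (hα₀ : 0 < α) (hα₁ : α < 1) (y : ℝ) :
    sInf {x | α ≤ cdf μ x} ≤ y ↔ α ≤ cdf μ y := by
  set S := {x | α ≤ cdf μ x}
  have hne : S.Nonempty := nonempty_setOf_le_cdf hα₁
  have hbdd : BddBelow S := bddBelow_setOf_le_cdf hα₀
  have hmem : sInf S ∈ S :=
    ContinuousWithinAt.closure_le (csInf_mem_closure hne hbdd) continuousWithinAt_const
      (((cdf μ).right_continuous _).mono fun x hx => csInf_le hbdd hx) fun _ hx => hx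
  exact ⟨fun h => hmem.trans (monotone_cdf μ h), fun h => csInf_le hbdd h⟩

end ProbabilityTheory

section ValueAtRisk

variable {Ω : Type*} [MeasurableSpace Ω] {P : Measure Ω} [IsProbabilityMeasure P] {Z : Ω → ℝ}

omit [IsProbabilityMeasure P] in
lemma tail_nonneg_s5 (x : ℝ) : 0 ≤ tail P Z x := ENNReal.toReal_nonneg

lemma cdf'_eq_cdf_map (hZ : Measurable Z) (x : ℝ) : cdf' P Z x = cdf (P.map Z) x := by
  have := Measure.isProbabilityMeasure_map (μ := P) hZ.aemeasurable
  rw [cdf_eq_real, map_measureReal_apply hZ measurableSet_Iic]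
  rfl

lemma tail_eq_one_sub_cdf' (hZ : Measurable Z) (x : ℝ) : tail P Z x = 1 - cdf' P Z x := by
  have : {ω | x < Z ω} = (Z ⁻¹' Set.Iic x)ᶜ := by ext; simp
  rw [tail, cdf', this, ← measureReal_def, ← measureReal_def,
    probReal_compl_eq_one_sub (hZ measurableSet_Iic)]
  rfl

lemma VaR_le_iff (hZ : Measurable Z) {α : ℝ} (hα₀ : 0 < α) (hα₁ : α < 1) (y : ℝ) :
    VaR P Z α ≤ y ↔ tail P Z y ≤ 1 - α := by
  simp only [VaR, tail_eq_one_sub_cdf' hZ, cdf'_eq_cdf_map hZ]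
  rw [sInf_setOf_le_cdf_le_iff hα₀ hα₁]
  constructor <;> intro <;> linarith

lemma lt_VaR_iff (hZ : Measurable Z) {α : ℝ} (hα₀ : 0 < α) (hα₁ : α < 1) (y : ℝ) :
    y < VaR P Z α ↔ 1 - α < tail P Z y := by
  simpa only [not_le] using (VaR_le_iff hZ hα₀ hα₁ y).not

lemma tendsto_VaR_atTop (hZ : Measurable Z) (hpos : ∀ᶠ x in atTop, tail P Z x ≠ 0) :
    Tendsto (VaR P Z) (𝓝[<] 1) atTop := by
  refine tendsto_atTop.2 fun M => ?_
  obtain ⟨x, hx, hxM⟩ := (hpos.and (eventually_ge_atTop M)).exists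
  have hx₀ : 0 < tail P Z x := (tail_nonneg_s5 x).lt_of_ne' hx
  filter_upwards [Ioo_mem_nhdsLT (max_lt one_pos (sub_lt_self 1 hx₀))] with α ⟨hα, hα₁⟩
  rw [max_lt_iff] at hα
  exact hxM.trans ((lt_VaR_iff hZ hα.1 hα₁ x).2 (by linarith)).le

end ValueAtRisk

lemma RegVary.eventually_ne_zero {f : ℝ → ℝ} {k : ℝ} (hf : RegVary f k) :
    ∀ᶠ x in atTop, f x ≠ 0 :=
  ((hf 2 two_pos).eventually_ne (Real.rpow_pos_of_pos two_pos k).ne').mono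
    fun x hx h0 => hx (by rw [h0, div_zero])

lemma tendsto_const_mul_rpow_atTop {a q : ℝ} (ha : 0 < a) (hq : 0 < q) :
    Tendsto (fun x : ℝ => a * x ^ q) atTop atTop :=
  (tendsto_rpow_atTop hq).const_mul_atTop ha

section Asymptotics

variable {f g : ℝ → ℝ} {β γ lam : ℝ}

lemma tendsto_comp_const_mul_rpow_div (hβ : 0 < β) (hγ : 0 < γ) (hlam : 0 < lam)
    (hg : RegVary g (-γ))
    (hsim : Tendsto (fun x => f x / (lam * g (x ^ (β / γ)))) atTop (𝓝 1)) :
    Tendsto (fun v => f (lam ^ (1 / β) * v ^ (γ / β)) / g v) atTop (𝓝 1) := by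
  set s := lam ^ (1 / γ)
  have hs : 0 < s := Real.rpow_pos_of_pos hlam _
  have hscale : Tendsto (fun v => lam ^ (1 / β) * v ^ (γ / β)) atTop atTop :=
    tendsto_const_mul_rpow_atTop (Real.rpow_pos_of_pos hlam _) (div_pos hγ hβ)
  have hinv : ∀ᶠ v in atTop, (lam ^ (1 / β) * v ^ (γ / β)) ^ (β / γ) = s * v := by
    filter_upwards [eventually_ge_atTop 0] with v hv
    rw [Real.mul_rpow (Real.rpow_nonneg hlam.le _) (Real.rpow_nonneg hv _),
      ← Real.rpow_mul hlam.le, ← Real.rpow_mul hv]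
    field_simp
    rw [Real.rpow_one]
  have hfg : Tendsto (fun v => f (lam ^ (1 / β) * v ^ (γ / β)) / (lam * g (s * v))) atTop (𝓝 1) :=
    (hsim.comp hscale).congr' (hinv.mono fun v hv => by simp only [Function.comp, hv])
  have hgg : Tendsto (fun v => lam * g (s * v) / g v) atTop (𝓝 1) := by
    have h := (hg s hs).const_mul lam
    rw [← Real.rpow_mul hlam.le, show 1 / γ * -γ = -1 by field_simp, Real.rpow_neg_one,
      mul_inv_cancel₀ hlam.ne'] at h
    exact h.congr fun v => by ring
  have hne : ∀ᶠ v in atTop, g (s * v) ≠ 0 :=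
    (tendsto_id.const_mul_atTop hs).eventually hg.eventually_ne_zero
  simpa only [mul_one] using (hfg.mul hgg).congr' <| hne.mono fun v hv => by
    field_simp

lemma tendsto_comp_mul_const_mul_rpow_div (hβ : 0 < β) (hγ : 0 < γ) (hlam : 0 < lam)
    (hf : RegVary f (-β)) (hg : RegVary g (-γ))
    (hsim : Tendsto (fun x => f x / (lam * g (x ^ (β / γ)))) atTop (𝓝 1)) {t : ℝ} (ht : 0 < t) :
    Tendsto (fun v => f (t * (lam ^ (1 / β) * v ^ (γ / β))) / g v) atTop (𝓝 (t ^ (-β))) := by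
  have hscale : Tendsto (fun v => lam ^ (1 / β) * v ^ (γ / β)) atTop atTop :=
    tendsto_const_mul_rpow_atTop (Real.rpow_pos_of_pos hlam _) (div_pos hγ hβ)
  have hne : ∀ᶠ v in atTop, f (lam ^ (1 / β) * v ^ (γ / β)) ≠ 0 :=
    hscale.eventually hf.eventually_ne_zero
  simpa only [mul_one] using ((hf t ht).comp hscale |>.mul
    (tendsto_comp_const_mul_rpow_div hβ hγ hlam hg hsim)).congr' <| hne.mono fun v hv => by
      simp only [Function.comp]
      field_simp

end Asymptotics

lemma Filter.Tendsto.eventually_lt_of_div_lt_one {ι : Type*} {l : Filter ι} {a b : ι → ℝ} {c : ℝ}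
    (h : Tendsto (fun i => a i / b i) l (𝓝 c)) (hc : c < 1) (hb : ∀ᶠ i in l, 0 < b i) :
    ∀ᶠ i in l, a i < b i := by
  filter_upwards [h.eventually_lt_const hc, hb] with i hi hbi
  rwa [div_lt_one hbi] at hi

lemma Filter.Tendsto.eventually_gt_of_one_lt_div {ι : Type*} {l : Filter ι} {a b : ι → ℝ} {c : ℝ}
    (h : Tendsto (fun i => a i / b i) l (𝓝 c)) (hc : 1 < c) (hb : ∀ᶠ i in l, 0 < b i) :
    ∀ᶠ i in l, b i < a i := by
  filter_upwards [h.eventually_const_lt hc, hb] with i hi hbi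
  rwa [one_lt_div hbi] at hi

lemma tendsto_div_nhds_one_of_eventually_bounds {ι : Type*} {l : Filter ι} {u w : ι → ℝ}
    (hw : ∀ᶠ i in l, 0 < w i) (hlow : ∀ t, 0 < t → t < 1 → ∀ᶠ i in l, t * w i ≤ u i)
    (hup : ∀ t, 1 < t → ∀ᶠ i in l, u i ≤ t * w i) :
    Tendsto (fun i => u i / w i) l (𝓝 1) := by
  refine tendsto_order.2 ⟨fun a ha => ?_, fun a ha => ?_⟩
  · obtain ⟨t, hat, ht⟩ := exists_between (max_lt ha one_pos : max a 0 < 1)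
    filter_upwards [hw, hlow t ((le_max_right a 0).trans_lt hat) ht] with i hwi hi
    exact ((le_max_left a 0).trans_lt hat).trans_le ((le_div_iff₀ hwi).2 hi)
  · obtain ⟨t, ht, hta⟩ := exists_between ha
    filter_upwards [hw, hup t ht] with i hwi hi
    exact ((div_le_iff₀ hwi).2 hi).trans_lt hta

section Comparison

variable {Ω : Type*} [MeasurableSpace Ω] {P : Measure Ω} [IsProbabilityMeasure P] {X Y : Ω → ℝ}

lemma eventually_VaR_le_of_eventually_tail_lt (hX : Measurable X) (hY : Measurable Y)
    {φ : ℝ → ℝ} (hφ : ∀ᶠ v in atTop, tail P X (φ v) < tail P Y v) :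
    ∀ᶠ α in 𝓝[<] 1, VaR P X α ≤ φ (VaR P Y α) := by
  have hY0 : ∀ᶠ v in atTop, tail P Y v ≠ 0 :=
    hφ.mono fun v hv => ((tail_nonneg_s5 _).trans_lt hv).ne'
  filter_upwards [(tendsto_VaR_atTop hY hY0).eventually hφ,
    Ioo_mem_nhdsLT (zero_lt_one' ℝ)] with α hα ⟨hα₀, hα₁⟩
  refine (VaR_le_iff hX hα₀ hα₁ _).2 (hα.le.trans ?_)
  exact (VaR_le_iff hY hα₀ hα₁ _).1 le_rfl

lemma eventually_le_VaR_of_eventually_lt_tail (hX : Measurable X) (hY : Measurable Y)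
    (hY0 : ∀ᶠ v in atTop, tail P Y v ≠ 0) {φ : ℝ → ℝ} (hφc : Continuous φ)
    (hφ : ∀ᶠ v in atTop, tail P Y v < tail P X (φ v)) :
    ∀ᶠ α in 𝓝[<] 1, φ (VaR P Y α) ≤ VaR P X α := by
  obtain ⟨M, hM⟩ := hφ.exists_forall_of_atTop
  filter_upwards [(tendsto_VaR_atTop hY hY0).eventually_gt_atTop M,
    Ioo_mem_nhdsLT (zero_lt_one' ℝ)] with α hMα ⟨hα₀, hα₁⟩
  -- `φ w < VaR P X α` for `w ∈ (M, VaR P Y α)`; let `w` increase to `VaR P Y α`.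
  refine le_of_tendsto (x := 𝓝[<] VaR P Y α) ((hφc.tendsto _).mono_left nhdsWithin_le_nhds) ?_
  filter_upwards [Ioo_mem_nhdsLT hMα] with w hw
  refine ((lt_VaR_iff hX hα₀ hα₁ _).2 ?_).le
  exact ((lt_VaR_iff hY hα₀ hα₁ w).1 hw.2).trans (hM w hw.1.le)

end Comparison

theorem stmt5 {Ω : Type*} [MeasurableSpace Ω] (P : Measure Ω) [IsProbabilityMeasure P]
    (X Y : Ω → ℝ) (hX : Measurable X) (hY : Measurable Y)
    (β γ lam : ℝ) (hβ : 0 < β) (hγ : 0 < γ) (hlam : 0 < lam)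
    (hRVX : RegVary (tail P X) (-β)) (hRVY : RegVary (tail P Y) (-γ))
    (hsim : Tendsto (fun x => tail P X x / (lam * tail P Y (x ^ (β / γ)))) atTop (𝓝 1)) :
    Tendsto (fun α => VaR P X α / (lam ^ (1 / β) * (VaR P Y α) ^ (γ / β)))
      (𝓝[<] (1 : ℝ)) (𝓝 1) := by
  have hY0 := hRVY.eventually_ne_zero
  have hYpos : ∀ᶠ v in atTop, 0 < tail P Y v :=
    hY0.mono fun v hv => (tail_nonneg_s5 v).lt_of_ne' hv
  have hlim := fun t (ht : 0 < t) =>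
    tendsto_comp_mul_const_mul_rpow_div hβ hγ hlam hRVX hRVY hsim ht
  have hcont : ∀ t, Continuous fun v => t * (lam ^ (1 / β) * v ^ (γ / β)) := fun t =>
    continuous_const.mul (continuous_const.mul (Real.continuous_rpow_const (div_pos hγ hβ).le))
  refine tendsto_div_nhds_one_of_eventually_bounds ?_ (fun t ht₀ ht₁ => ?_) (fun t ht => ?_)
  · filter_upwards [(tendsto_VaR_atTop hY hY0).eventually_gt_atTop 0] with α hα
    positivity
  · refine eventually_le_VaR_of_eventually_lt_tail hX hY hY0 (hcont t) ?_
    exact (hlim t ht₀).eventually_gt_of_one_lt_div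
      (Real.one_lt_rpow_of_pos_of_lt_one_of_neg ht₀ ht₁ (neg_lt_zero.2 hβ)) hYpos
  · refine eventually_VaR_le_of_eventually_tail_lt hX hY
      (φ := fun v => t * (lam ^ (1 / β) * v ^ (γ / β))) ?_
    exact (hlim t (one_pos.trans ht)).eventually_lt_of_div_lt_one
      (Real.rpow_lt_one_of_one_lt_of_neg ht (neg_lt_zero.2 hβ)) hYpos
end
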